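/- Let (X,d,μ) be a metric measure space with μ a doubling measure, μ(X)=1 and diam(X)=1, equipped with a multiresolution family 𝓑 with constant A ≥ 1. Then there is a constant C_X > 0, depending only on A and the doubling constant of X (and not on E), such that for every set E ⊆ X, Σ_{B ∈ 𝓑, B ∩ E ≠ ∅} d_E(B)·μ(B) ≤ C_X. -/

import Mathlib

open Metric MeasureTheory
open scoped Classical ENNReal

noncomputable section

/-- `d_E(B(c,r)) = (1/μ(B)) ∫_B dist(x,E)/r dμ(x)`. -/
def dE {X : Type*} [MetricSpace X] [MeasurableSpace X] (μ : MeasureTheory.Measure X)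
    (E : Set X) (c : X) (r : ℝ) : ℝ :=
  (∫ x in Metric.closedBall c r, Metric.infDist x E ∂μ) /
    (r * (μ (Metric.closedBall c r)).toReal)

/-- A `C`-doubling measure: nonzero, finite on balls, and doubling with constant `C`. -/
def IsDoubling {X : Type*} [MetricSpace X] [MeasurableSpace X]
    (μ : MeasureTheory.Measure X) (C : ℝ) : Prop :=
  μ ≠ 0 ∧ (∀ (x : X) (r : ℝ), μ (Metric.closedBall x r) < ⊤) ∧
    ∀ (x : X) (r : ℝ),
      μ (Metric.closedBall x (2 * r)) ≤ ENNReal.ofReal C * μ (Metric.closedBall x r)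

/-- An `s`-net: `s`-separated and every point of `X` is within distance `< s` of it. -/
def IsNet {X : Type*} [MetricSpace X] (s : ℝ) (N : Set X) : Prop :=
  (∀ x ∈ N, ∀ y ∈ N, x ≠ y → s ≤ dist x y) ∧ ∀ z : X, ∃ x ∈ N, dist z x < s

/-!
A ball `B` of radius `r` meeting `E` lies within `2r` of `E`, so
`d_E(B) μ(B) = r⁻¹ ∫_B dist(·, E)` only sees the truncation
`g_r = dist(·, E) · 1{dist(·, E) ≤ 2r}`. By the doubling volume-packing argument, the balls
`B(c, A 2^{-k})`, `c ∈ N_k`, overlap at most `C^m` times once `2^m ≥ 8A + 4`, so level `k`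
contributes at most `C^m r_k⁻¹ ∫ g_{r_k}`. At a point with `dist(x, E) = d`, the surviving
ratios `d / r_k` are at most `2` and grow geometrically with ratio `2`, so they add up to at
most `4`; hence the whole sum is at most `4 C^m μ(X)`.
-/

open Set

theorem sum_range_ite_mul_two_pow_le {a M : ℝ} (ha : 0 ≤ a) (hM : 0 ≤ M) (n : ℕ) :
    ∑ k ∈ Finset.range n, (if a * 2 ^ k ≤ M then a * 2 ^ k else 0) ≤ 2 * M := by
  -- The partial sums also stay below `a (2^n - 1)`, so adding a surviving term `a 2^n ≤ M`
  -- keeps them below `2 M`.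
  suffices
      ∑ k ∈ Finset.range n, (if a * 2 ^ k ≤ M then a * 2 ^ k else 0) ≤ a * (2 ^ n - 1) ∧
      ∑ k ∈ Finset.range n, (if a * 2 ^ k ≤ M then a * 2 ^ k else 0) ≤ 2 * M from this.2
  induction n with
  | zero => simp [hM]
  | succ n ih =>
    rw [Finset.sum_range_succ, pow_succ]
    have h2n : (1 : ℝ) ≤ 2 ^ n := one_le_pow₀ one_le_two
    split_ifs with hn
    · constructor <;> nlinarith [ih.1]
    · constructor <;> nlinarith [ih.1, ih.2]

section DistanceToSet

variable {X : Type*} [MetricSpace X]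

theorem infDist_le_two_mul_of_mem_closedBall {E : Set X} {c x : X} {r : ℝ}
    (hE : (closedBall c r ∩ E).Nonempty) (hx : x ∈ closedBall c r) : infDist x E ≤ 2 * r := by
  obtain ⟨y, hy, hyE⟩ := hE
  calc infDist x E ≤ dist x y := infDist_le_dist_of_mem hyE
    _ ≤ dist x c + dist y c := dist_triangle_right x y c
    _ ≤ 2 * r := by linarith [mem_closedBall.1 hx, mem_closedBall.1 hy]

def truncInfDist (E : Set X) (ρ : ℝ) : X → ℝ≥0∞ :=
  {x | infDist x E ≤ ρ}.indicator fun x => ENNReal.ofReal (infDist x E)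

theorem truncInfDist_apply (E : Set X) (ρ : ℝ) (x : X) :
    truncInfDist E ρ x = if infDist x E ≤ ρ then ENNReal.ofReal (infDist x E) else 0 :=
  indicator_apply _ _ _

variable [MeasurableSpace X] [OpensMeasurableSpace X] {μ : Measure X}

theorem ofReal_dE_mul_measure_closedBall {E : Set X} {c : X} {r : ℝ} (hr : 0 < r)
    (hB : μ (closedBall c r) ≠ ⊤) (hE : (closedBall c r ∩ E).Nonempty) :
    ENNReal.ofReal (dE μ E c r) * μ (closedBall c r) =
      (ENNReal.ofReal r)⁻¹ * ∫⁻ x in closedBall c r, ENNReal.ofReal (infDist x E) ∂μ := by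
  set B := closedBall c r
  set L := ∫⁻ x in B, ENNReal.ofReal (infDist x E) ∂μ
  have hL : L ≠ ⊤ := by
    refine ne_top_of_le_ne_top (ENNReal.mul_ne_top (ENNReal.ofReal_ne_top (r := 2 * r)) hB) ?_
    calc L ≤ ∫⁻ _ in B, ENNReal.ofReal (2 * r) ∂μ :=
          setLIntegral_mono' measurableSet_closedBall fun x hx =>
            ENNReal.ofReal_le_ofReal (infDist_le_two_mul_of_mem_closedBall hE hx)
      _ = ENNReal.ofReal (2 * r) * μ B := setLIntegral_const _ _
  have hint : ∫ x in B, infDist x E ∂μ = L.toReal :=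
    integral_eq_lintegral_of_nonneg_ae (ae_of_all _ fun _ => infDist_nonneg)
      (continuous_infDist_pt E).aestronglyMeasurable
  rcases eq_or_ne (μ B) 0 with hB0 | hB0
  · rw [hB0, mul_zero, show L = 0 from setLIntegral_measure_zero _ _ hB0, mul_zero]
  rw [dE, hint, ENNReal.ofReal_div_of_pos (by positivity [ENNReal.toReal_pos hB0 hB]),
    ENNReal.ofReal_toReal hL, ENNReal.ofReal_mul hr.le, ENNReal.ofReal_toReal hB,
    div_eq_mul_inv, ENNReal.mul_inv (Or.inr hB) (Or.inr hB0), mul_assoc, mul_assoc,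
    ENNReal.inv_mul_cancel hB0 hB, mul_one, mul_comm]

theorem measurable_truncInfDist (E : Set X) (ρ : ℝ) : Measurable (truncInfDist E ρ) :=
  (continuous_infDist_pt E).measurable.ennreal_ofReal.indicator
    (measurableSet_le (continuous_infDist_pt E).measurable measurable_const)

end DistanceToSet

section Doubling

variable {X : Type*} [MetricSpace X] [MeasurableSpace X] {μ : Measure X} {C : ℝ}

namespace IsDoubling

theorem measure_closedBall_two_pow_mul_le (h : IsDoubling μ C) (j : ℕ) (x : X) (r : ℝ) :
    μ (closedBall x (2 ^ j * r)) ≤ ENNReal.ofReal C ^ j * μ (closedBall x r) := by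
  induction j with
  | zero => simp
  | succ j ih =>
    calc μ (closedBall x (2 ^ (j + 1) * r)) = μ (closedBall x (2 * (2 ^ j * r))) := by ring_nf
      _ ≤ ENNReal.ofReal C * μ (closedBall x (2 ^ j * r)) := h.2.2 _ _
      _ ≤ ENNReal.ofReal C * (ENNReal.ofReal C ^ j * μ (closedBall x r)) := by gcongr
      _ = ENNReal.ofReal C ^ (j + 1) * μ (closedBall x r) := by ring

theorem measure_closedBall_pos (h : IsDoubling μ C) (hX : Bornology.IsBounded (univ : Set X))
    (x : X) {r : ℝ} (hr : 0 < r) : 0 < μ (closedBall x r) := by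
  obtain ⟨R, hR⟩ := (isBounded_iff_subset_closedBall x).1 hX
  obtain ⟨j, hj⟩ := pow_unbounded_of_one_lt (R / r) one_lt_two
  have hRj : R ≤ 2 ^ j * r := by rw [div_lt_iff₀ hr] at hj; linarith
  refine pos_iff_ne_zero.2 fun h0 =>
    h.1 (Measure.measure_univ_eq_zero.1 (nonpos_iff_eq_zero.1 ?_))
  calc μ univ ≤ μ (closedBall x (2 ^ j * r)) :=
        measure_mono (hR.trans (closedBall_subset_closedBall hRj))
    _ ≤ ENNReal.ofReal C ^ j * μ (closedBall x r) := h.measure_closedBall_two_pow_mul_le j x r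
    _ = 0 := by rw [h0, mul_zero]

variable [OpensMeasurableSpace X]

theorem card_le_of_pairwise_le_dist (h : IsDoubling μ C) {x : X} {s R : ℝ} (hs : 0 < s)
    (hpos : 0 < μ (closedBall x (R + s))) {j : ℕ} (hj : 2 * R + s ≤ 2 ^ j * (s / 4))
    {t : Finset X} (hsep : (t : Set X).Pairwise fun c c' => s ≤ dist c c')
    (hmem : ∀ c ∈ t, dist c x ≤ R) :
    (t.card : ℝ≥0∞) ≤ ENNReal.ofReal C ^ j := by
  set P := μ (closedBall x (R + s))
  have hcover : ∀ c ∈ t, P ≤ ENNReal.ofReal C ^ j * μ (closedBall c (s / 4)) := fun c hc =>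
    calc P ≤ μ (closedBall c (2 ^ j * (s / 4))) := by
          refine measure_mono fun y hy => ?_
          rw [mem_closedBall] at hy ⊢
          linarith [dist_triangle_right y c x, hmem c hc]
      _ ≤ _ := h.measure_closedBall_two_pow_mul_le j c (s / 4)
  have hdisj : (t : Set X).PairwiseDisjoint fun c => closedBall c (s / 4) :=
    fun c hc c' hc' hne => closedBall_disjoint_closedBall (by linarith [hsep hc hc' hne])
  have hpack : ∑ c ∈ t, μ (closedBall c (s / 4)) ≤ P := by
    rw [← measure_biUnion_finset hdisj fun c _ => measurableSet_closedBall]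
    refine measure_mono (iUnion₂_subset fun c hc y hy => ?_)
    rw [mem_closedBall] at hy ⊢
    linarith [dist_triangle y c x, hmem c hc]
  refine (ENNReal.mul_le_mul_iff_left hpos.ne' (h.2.1 _ _).ne).1 ?_
  calc (t.card : ℝ≥0∞) * P = ∑ _c ∈ t, P := by rw [Finset.sum_const, nsmul_eq_mul]
    _ ≤ ∑ c ∈ t, ENNReal.ofReal C ^ j * μ (closedBall c (s / 4)) := Finset.sum_le_sum hcover
    _ = ENNReal.ofReal C ^ j * ∑ c ∈ t, μ (closedBall c (s / 4)) := by rw [Finset.mul_sum]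
    _ ≤ ENNReal.ofReal C ^ j * P := by gcongr

theorem tsum_setLIntegral_closedBall_le (h : IsDoubling μ C)
    (hX : Bornology.IsBounded (univ : Set X)) {S : Set X} {s r : ℝ} (hs : 0 < s) (hr : 0 ≤ r)
    {j : ℕ} (hj : 2 * r + s ≤ 2 ^ j * (s / 4)) (hS : S.Pairwise fun c c' => s ≤ dist c c')
    {f : X → ℝ≥0∞} (hf : Measurable f) :
    ∑' c : S, ∫⁻ x in closedBall (c : X) r, f x ∂μ ≤
      ENNReal.ofReal C ^ j * ∫⁻ x, f x ∂μ := by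
  refine ENNReal.summable.tsum_le_of_sum_le fun t => ?_
  have hoverlap : ∀ x, ((t.filter fun c : S => x ∈ closedBall (c : X) r).card : ℝ≥0∞) ≤
      ENNReal.ofReal C ^ j := fun x => by
    rw [← Finset.card_map (Function.Embedding.subtype _)]
    refine h.card_le_of_pairwise_le_dist hs (h.measure_closedBall_pos hX x (by linarith)) hj
      (fun c hc c' hc' hne => ?_) fun c hc => ?_
    · simp only [Finset.coe_map, Function.Embedding.coe_subtype, mem_image] at hc hc'
      obtain ⟨c, -, rfl⟩ := hc
      obtain ⟨c', -, rfl⟩ := hc'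
      exact hS c.2 c'.2 hne
    · simp only [Finset.mem_map, Finset.mem_filter, Function.Embedding.coe_subtype,
        mem_closedBall] at hc
      obtain ⟨c, ⟨-, hc⟩, rfl⟩ := hc
      rwa [dist_comm]
  calc ∑ c ∈ t, ∫⁻ x in closedBall (c : X) r, f x ∂μ
      = ∫⁻ x, ∑ c ∈ t, (closedBall (c : X) r).indicator f x ∂μ := by
        rw [lintegral_finsetSum _ fun c _ => hf.indicator measurableSet_closedBall]
        simp only [lintegral_indicator measurableSet_closedBall]
    _ ≤ ∫⁻ x, ENNReal.ofReal C ^ j * f x ∂μ := lintegral_mono fun x => by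
        simp only [indicator_apply]
        rw [Finset.sum_ite, Finset.sum_const_zero, add_zero, Finset.sum_const, nsmul_eq_mul]
        gcongr
        exact hoverlap x
    _ = ENNReal.ofReal C ^ j * ∫⁻ x, f x ∂μ := lintegral_const_mul _ hf

theorem tsum_ite_ofReal_dE_mul_le (h : IsDoubling μ C)
    (hX : Bornology.IsBounded (univ : Set X)) {S : Set X} {s r : ℝ} (hs : 0 < s) (hr : 0 < r)
    {j : ℕ} (hj : 2 * r + s ≤ 2 ^ j * (s / 4)) (hS : S.Pairwise fun c c' => s ≤ dist c c')
    (E : Set X) :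
    ∑' c : S, (if (closedBall (c : X) r ∩ E).Nonempty then
        ENNReal.ofReal (dE μ E c r) * μ (closedBall (c : X) r) else 0) ≤
      (ENNReal.ofReal r)⁻¹ *
        (ENNReal.ofReal C ^ j * ∫⁻ x, truncInfDist E (2 * r) x ∂μ) := by
  calc _ ≤ ∑' c : S, (ENNReal.ofReal r)⁻¹ *
        ∫⁻ x in closedBall (c : X) r, truncInfDist E (2 * r) x ∂μ := by
        refine ENNReal.tsum_le_tsum fun c => ?_
        split_ifs with hE
        · rw [ofReal_dE_mul_measure_closedBall hr (h.2.1 _ _).ne hE,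
            setLIntegral_congr_fun (g := truncInfDist E (2 * r)) measurableSet_closedBall
              fun x hx => by
                rw [truncInfDist_apply, if_pos (infDist_le_two_mul_of_mem_closedBall hE hx)]]
        · exact zero_le
    _ = (ENNReal.ofReal r)⁻¹ * ∑' c : S,
        ∫⁻ x in closedBall (c : X) r, truncInfDist E (2 * r) x ∂μ := ENNReal.tsum_mul_left
    _ ≤ _ := by
        gcongr
        exact h.tsum_setLIntegral_closedBall_le hX hs hr.le hj hS (measurable_truncInfDist E _)

end IsDoubling

end Doubling

theorem tsum_inv_mul_truncInfDist_le {X : Type*} [MetricSpace X] {A : ℝ} (hA : 0 < A)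
    (E : Set X) (x : X) :
    ∑' k : ℕ, (ENNReal.ofReal (A * 2 ^ (-(k : ℤ))))⁻¹ *
      truncInfDist E (2 * (A * 2 ^ (-(k : ℤ)))) x ≤ 4 := by
  set d := infDist x E
  have ha : 0 ≤ d / A := div_nonneg infDist_nonneg hA.le
  have hterm : ∀ k : ℕ, (ENNReal.ofReal (A * 2 ^ (-(k : ℤ))))⁻¹ *
      truncInfDist E (2 * (A * 2 ^ (-(k : ℤ)))) x =
        ENNReal.ofReal (if d / A * 2 ^ k ≤ 2 then d / A * 2 ^ k else 0) := fun k => by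
    have hr : 0 < A * 2 ^ (-(k : ℤ)) := by positivity
    have hdr : d / (A * 2 ^ (-(k : ℤ))) = d / A * 2 ^ k := by
      rw [zpow_neg, zpow_natCast]
      field_simp
    rw [truncInfDist_apply, ← hdr]
    by_cases hd : d ≤ 2 * (A * 2 ^ (-(k : ℤ)))
    · rw [if_pos hd, if_pos ((div_le_iff₀ hr).2 hd), ENNReal.ofReal_div_of_pos hr,
        ENNReal.div_eq_inv_mul]
    · rw [if_neg hd, if_neg (mt (div_le_iff₀ hr).1 hd), mul_zero, ENNReal.ofReal_zero]
  refine ENNReal.tsum_le_of_sum_range_le fun n => ?_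
  rw [Finset.sum_congr rfl fun k _ => hterm k,
    ← ENNReal.ofReal_sum_of_nonneg fun k _ => by split_ifs <;> positivity]
  calc _ ≤ ENNReal.ofReal (2 * 2) :=
        ENNReal.ofReal_le_ofReal (sum_range_ite_mul_two_pow_le ha zero_le_two n)
    _ = 4 := by norm_num

/-- In a metric measure space with a `C`-doubling measure, `μ X = 1`, `diam X = 1`,
equipped with a multiresolution family with constant `A ≥ 1`, there is `C_X > 0`
depending only on `A` and the doubling constant (not on `E`) such that for every set
`E ⊆ X`, `Σ_{B ∈ 𝓑, B ∩ E ≠ ∅} d_E(B)·μ(B) ≤ C_X`. -/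
theorem sum_dE_bounded (C A : ℝ) (hC : 0 < C) (hA : 1 ≤ A) :
    ∃ CX : ℝ, 0 < CX ∧
      ∀ (X : Type) [MetricSpace X] [MeasurableSpace X] [BorelSpace X]
        (μ : MeasureTheory.Measure X) (N : ℕ → Set X),
        IsDoubling μ C →
        μ Set.univ = 1 →
        Metric.diam (Set.univ : Set X) = 1 →
        (∀ k : ℕ, IsNet ((2 : ℝ) ^ (-(k : ℤ))) (N k)) →
        (∀ k : ℕ, N k ⊆ N (k + 1)) →
        ∀ E : Set X,
          (∑' (k : ℕ) (c : N k),
              if (Metric.closedBall (c : X) (A * 2 ^ (-(k : ℤ))) ∩ E).Nonempty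
                then ENNReal.ofReal (dE μ E (c : X) (A * 2 ^ (-(k : ℤ)))) *
                      μ (Metric.closedBall (c : X) (A * 2 ^ (-(k : ℤ))))
                else 0) ≤ ENNReal.ofReal CX := by
  have hA0 : 0 < A := zero_lt_one.trans_le hA
  obtain ⟨m, hm⟩ := pow_unbounded_of_one_lt (8 * A + 4) one_lt_two
  refine ⟨4 * C ^ m, by positivity, fun X _ _ _ μ N hμ hμ1 hdiam hN _ E => ?_⟩
  have hX : Bornology.IsBounded (univ : Set X) := by
    by_contra h
    exact zero_ne_one (diam_eq_zero_of_unbounded h ▸ hdiam)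
  have hj : ∀ k : ℕ,
      2 * (A * 2 ^ (-(k : ℤ))) + 2 ^ (-(k : ℤ)) ≤ 2 ^ m * (2 ^ (-(k : ℤ)) / 4) := by
    intro k
    nlinarith [zpow_pos (two_pos (α := ℝ)) (-(k : ℤ))]
  calc _ ≤ ∑' k : ℕ, (ENNReal.ofReal (A * 2 ^ (-(k : ℤ))))⁻¹ * (ENNReal.ofReal C ^ m *
        ∫⁻ x, truncInfDist E (2 * (A * 2 ^ (-(k : ℤ)))) x ∂μ) :=
        ENNReal.tsum_le_tsum fun k => hμ.tsum_ite_ofReal_dE_mul_le hX (by positivity)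
          (by positivity) (hj k) (hN k).1 E
    _ = ENNReal.ofReal C ^ m * ∫⁻ x, ∑' k : ℕ,
        (ENNReal.ofReal (A * 2 ^ (-(k : ℤ))))⁻¹ *
          truncInfDist E (2 * (A * 2 ^ (-(k : ℤ)))) x ∂μ := by
        rw [lintegral_tsum fun k => ((measurable_truncInfDist E _).const_mul _).aemeasurable,
          ← ENNReal.tsum_mul_left]
        refine tsum_congr fun k => ?_
        rw [lintegral_const_mul _ (measurable_truncInfDist E _), mul_left_comm]
    _ ≤ ENNReal.ofReal C ^ m * ∫⁻ _, 4 ∂μ := by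
        gcongr with x
        exact tsum_inv_mul_truncInfDist_le hA0 E x
    _ = ENNReal.ofReal (4 * C ^ m) := by
        rw [lintegral_const, hμ1, mul_one, ENNReal.ofReal_mul zero_le_four,
          ENNReal.ofReal_pow hC.le, ENNReal.ofReal_ofNat, mul_comm]
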